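/- arXiv:1602.03040 — 4 statements merged into one kernel-verified Lean document; each statement's English description precedes it below -/
import Mathlib

section
/- (Theorem 1, convergence of SWVP for linearly separable data.) Let d : ℕ, let u : EuclideanSpace ℝ (Fin d) with ‖u‖ = 1, let δ > 0 and R ≥ 0. Let w : ℕ → EuclideanSpace ℝ (Fin d) with w 0 = 0, and let t : ℕ. Suppose that for every s < t, the step from w s to w (s+1) is an SWVP update step with respect to u, δ, R. Then (t : ℝ) ≤ R² / δ². -/
open scoped RealInnerProductSpace BigOperators

/-- An SWVP update step from `w` to `w'` with respect to a unit vector `u`,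
a margin `δ` and a radius `R`: there is a nonempty finite family of vectors
`v J` (the feature differences of the mixed assignments), each with margin at
least `δ` against `u` and norm at most `R`, and a weight vector `γ` satisfying
the γ selection conditions, such that `w' = w + ∑ J, γ J • v J`. -/
def SWVPStep {d : ℕ} (u : EuclideanSpace ℝ (Fin d)) (δ R : ℝ)
    (w w' : EuclideanSpace ℝ (Fin d)) : Prop :=
  ∃ (n : ℕ) (v : Fin (n + 1) → EuclideanSpace ℝ (Fin d)) (γ : Fin (n + 1) → ℝ),
    (∀ J, δ ≤ ⟪u, v J⟫) ∧
    (∀ J, ‖v J‖ ≤ R) ∧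
    (∀ J, 0 ≤ γ J) ∧
    (∑ J, γ J) = 1 ∧
    ⟪w, ∑ J, γ J • v J⟫ ≤ 0 ∧
    w' = w + ∑ J, γ J • v J

/-- Theorem 1: convergence of SWVP for linearly separable data. -/
theorem swvp_convergence {d : ℕ} (u : EuclideanSpace ℝ (Fin d)) (hu : ‖u‖ = 1)
    (δ R : ℝ) (hδ : 0 < δ) (hR : 0 ≤ R)
    (w : ℕ → EuclideanSpace ℝ (Fin d)) (hw0 : w 0 = 0) (t : ℕ)
    (hstep : ∀ s < t, SWVPStep u δ R (w s) (w (s + 1))) :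
    (t : ℝ) ≤ R ^ 2 / δ ^ 2 := by
  -- key invariants
  have key : ∀ s ≤ t, δ * s ≤ ⟪u, w s⟫ ∧ ‖w s‖ ^ 2 ≤ s * R ^ 2 := by
    intro s hs
    induction s with
    | zero => simp [hw0]
    | succ s ih =>
      obtain ⟨h1, h2⟩ := ih (Nat.le_of_succ_le hs)
      obtain ⟨n, v, γ, hmargin, hnorm, hγ0, hγsum, horth, heq⟩ :=
        hstep s (Nat.lt_of_succ_le hs)
      set Δ := ∑ J, γ J • v J with hΔ
      have hmarg : δ ≤ ⟪u, Δ⟫ := by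
        rw [hΔ, inner_sum]
        calc δ = ∑ J, γ J * δ := by
              rw [← Finset.sum_mul, hγsum, one_mul]
          _ ≤ ∑ J, γ J * ⟪u, v J⟫ := by
              apply Finset.sum_le_sum
              intro J _
              exact mul_le_mul_of_nonneg_left (hmargin J) (hγ0 J)
          _ = ∑ J, ⟪u, γ J • v J⟫ :=
              Finset.sum_congr rfl fun J _ => (real_inner_smul_right u (v J) (γ J)).symm
      have hΔnorm : ‖Δ‖ ≤ R := by
        calc ‖Δ‖ ≤ ∑ J, ‖γ J • v J‖ := norm_sum_le _ _
          _ ≤ ∑ J, γ J * R := by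
              apply Finset.sum_le_sum
              intro J _
              rw [norm_smul, Real.norm_eq_abs, abs_of_nonneg (hγ0 J)]
              exact mul_le_mul_of_nonneg_left (hnorm J) (hγ0 J)
          _ = R := by rw [← Finset.sum_mul, hγsum, one_mul]
      constructor
      · rw [heq, inner_add_right]
        push_cast
        nlinarith
      · rw [heq, ← real_inner_self_eq_norm_sq]
        have expand : ⟪w s + Δ, w s + Δ⟫ = ⟪w s, w s⟫ + 2 * ⟪w s, Δ⟫ + ⟪Δ, Δ⟫ := by
          rw [inner_add_add_self, real_inner_comm Δ (w s)]; ring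
        rw [expand, real_inner_self_eq_norm_sq, real_inner_self_eq_norm_sq]
        have hΔsq : ‖Δ‖ ^ 2 ≤ R ^ 2 := by nlinarith [norm_nonneg Δ]
        push_cast
        nlinarith
  obtain ⟨h1, h2⟩ := key t le_rfl
  have hcs : ⟪u, w t⟫ ≤ ‖w t‖ := by
    calc ⟪u, w t⟫ ≤ ‖u‖ * ‖w t‖ := real_inner_le_norm u (w t)
      _ = ‖w t‖ := by rw [hu, one_mul]
  have h3 : (δ * t) ^ 2 ≤ t * R ^ 2 := by
    have ht0 : (0:ℝ) ≤ δ * t := by positivity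
    nlinarith [norm_nonneg (w t)]
  rcases Nat.eq_zero_or_pos t with ht | ht
  · subst ht; simp; positivity
  · have htR : (0:ℝ) < t := by exact_mod_cast ht
    rw [le_div_iff₀ (by positivity)]
    nlinarith
end

section
/- (Lower bound step in the proof of Theorem 1.) Let d : ℕ, let u : EuclideanSpace ℝ (Fin d) with ‖u‖ = 1, let δ > 0 and R ≥ 0. Let w : ℕ → EuclideanSpace ℝ (Fin d) with w 0 = 0, and let t : ℕ. Suppose that for every s < t, the step from w s to w (s+1) is an SWVP update step with respect to u, δ, R. Then ⟪u, w t⟫ ≥ t · δ, and consequently ‖w t‖² ≥ δ² · t². -/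
open scoped RealInnerProductSpace BigOperators

/-- Lower bound step in the proof of Theorem 1. -/
theorem swvp_lower_bound {d : ℕ} (u : EuclideanSpace ℝ (Fin d)) (hu : ‖u‖ = 1)
    (δ R : ℝ) (hδ : 0 < δ) (hR : 0 ≤ R)
    (w : ℕ → EuclideanSpace ℝ (Fin d)) (hw0 : w 0 = 0) (t : ℕ)
    (hstep : ∀ s < t, SWVPStep u δ R (w s) (w (s + 1))) :
    (t : ℝ) * δ ≤ ⟪u, w t⟫ ∧ δ ^ 2 * (t : ℝ) ^ 2 ≤ ‖w t‖ ^ 2 := by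
  have key : (t : ℝ) * δ ≤ ⟪u, w t⟫ := by
    induction t with
    | zero => simp [hw0]
    | succ t ih =>
      have ih' := ih (fun s hs => hstep s (Nat.lt_succ_of_lt hs))
      obtain ⟨n, v, γ, hmargin, _, hγ0, hγ1, _, hupd⟩ := hstep t (Nat.lt_succ_self t)
      have : δ ≤ ⟪u, ∑ J, γ J • v J⟫ := by
        rw [inner_sum]
        calc δ = ∑ J, γ J * δ := by rw [← Finset.sum_mul, hγ1, one_mul]
          _ ≤ ∑ J, ⟪u, γ J • v J⟫ := by
              apply Finset.sum_le_sum
              intro J _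
              rw [real_inner_smul_right]
              exact mul_le_mul_of_nonneg_left (hmargin J) (hγ0 J)
      rw [hupd, inner_add_right]
      push_cast
      nlinarith
  refine ⟨key, ?_⟩
  have hcs : ⟪u, w t⟫ ≤ ‖w t‖ := by
    calc ⟪u, w t⟫ ≤ ‖u‖ * ‖w t‖ := real_inner_le_norm u (w t)
      _ = ‖w t‖ := by rw [hu, one_mul]
  have h1 : (t : ℝ) * δ ≤ ‖w t‖ := key.trans hcs
  have h0 : (0:ℝ) ≤ (t:ℝ) * δ := mul_nonneg (Nat.cast_nonneg t) hδ.le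
  nlinarith [mul_self_le_mul_self h0 h1]
end

section
/- (Upper bound step in the proof of Theorem 1.) Let d : ℕ, let u : EuclideanSpace ℝ (Fin d) with ‖u‖ = 1, let δ > 0 and R ≥ 0. Let w : ℕ → EuclideanSpace ℝ (Fin d) with w 0 = 0, and let t : ℕ. Suppose that for every s < t, the step from w s to w (s+1) is an SWVP update step with respect to u, δ, R. Then ‖w t‖² ≤ t · R². -/
open scoped RealInnerProductSpace BigOperators

/-- Upper bound step in the proof of Theorem 1. -/
theorem swvp_upper_bound {d : ℕ} (u : EuclideanSpace ℝ (Fin d)) (hu : ‖u‖ = 1)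
    (δ R : ℝ) (hδ : 0 < δ) (hR : 0 ≤ R)
    (w : ℕ → EuclideanSpace ℝ (Fin d)) (hw0 : w 0 = 0) (t : ℕ)
    (hstep : ∀ s < t, SWVPStep u δ R (w s) (w (s + 1))) :
    ‖w t‖ ^ 2 ≤ (t : ℝ) * R ^ 2 := by
  induction t with
  | zero => simp [hw0]
  | succ t ih =>
    have ih' := ih (fun s hs => hstep s (Nat.lt_succ_of_lt hs))
    obtain ⟨n, v, γ, hmargin, hnorm, hγ0, hγ1, hinner, heq⟩ :=
      hstep t (Nat.lt_succ_self t)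
    set Δ := ∑ J, γ J • v J with hΔ
    have hΔnorm : ‖Δ‖ ≤ R := by
      calc ‖Δ‖ ≤ ∑ J, ‖γ J • v J‖ := norm_sum_le _ _
        _ ≤ ∑ J : Fin (n+1), γ J * R := by
            apply Finset.sum_le_sum
            intro J _
            rw [norm_smul, Real.norm_eq_abs, abs_of_nonneg (hγ0 J)]
            exact mul_le_mul_of_nonneg_left (hnorm J) (hγ0 J)
        _ = R := by rw [← Finset.sum_mul, hγ1, one_mul]
    have hexp : ‖w (t+1)‖ ^ 2 = ‖w t‖ ^ 2 + 2 * ⟪w t, Δ⟫ + ‖Δ‖ ^ 2 := by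
      rw [heq]
      rw [← real_inner_self_eq_norm_sq, ← real_inner_self_eq_norm_sq,
        ← real_inner_self_eq_norm_sq]
      rw [inner_add_add_self, real_inner_comm Δ (w t)]
      ring
    have hΔsq : ‖Δ‖ ^ 2 ≤ R ^ 2 := by
      apply sq_le_sq' _ hΔnorm
      linarith [norm_nonneg Δ]
    rw [hexp]
    push_cast
    nlinarith
end

section
/- (Two-sided sandwich in the proof of Theorem 1.) Let d : ℕ, let u : EuclideanSpace ℝ (Fin d) with ‖u‖ = 1, let δ > 0 and R ≥ 0. Let w : ℕ → EuclideanSpace ℝ (Fin d) with w 0 = 0, and let t : ℕ. Suppose that for every s < t, the step from w s to w (s+1) is an SWVP update step with respect to u, δ, R. Then δ² · t² ≤ ‖w t‖² and ‖w t‖² ≤ t · R². -/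
open scoped RealInnerProductSpace BigOperators

/-- Two-sided sandwich in the proof of Theorem 1. -/
theorem swvp_sandwich {d : ℕ} (u : EuclideanSpace ℝ (Fin d)) (hu : ‖u‖ = 1)
    (δ R : ℝ) (hδ : 0 < δ) (hR : 0 ≤ R)
    (w : ℕ → EuclideanSpace ℝ (Fin d)) (hw0 : w 0 = 0) (t : ℕ)
    (hstep : ∀ s < t, SWVPStep u δ R (w s) (w (s + 1))) :
    δ ^ 2 * (t : ℝ) ^ 2 ≤ ‖w t‖ ^ 2 ∧ ‖w t‖ ^ 2 ≤ (t : ℝ) * R ^ 2 := by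
  have key : ∀ s ≤ t, δ * s ≤ ⟪u, w s⟫ ∧ ‖w s‖ ^ 2 ≤ (s : ℝ) * R ^ 2 := by
    intro s hs
    induction s with
    | zero => simp [hw0]
    | succ s ih =>
      obtain ⟨ih1, ih2⟩ := ih (le_of_lt (Nat.lt_of_succ_le hs))
      obtain ⟨n, v, γ, hmargin, hnorm, hγ0, hγ1, hinner, heq⟩ :=
        hstep s (Nat.lt_of_succ_le hs)
      set g := ∑ J, γ J • v J with hg
      have hgnorm : ‖g‖ ≤ R := by
        calc ‖g‖ ≤ ∑ J, ‖γ J • v J‖ := norm_sum_le _ _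
          _ ≤ ∑ J, γ J * R := by
              apply Finset.sum_le_sum
              intro J _
              rw [norm_smul, Real.norm_eq_abs, abs_of_nonneg (hγ0 J)]
              exact mul_le_mul_of_nonneg_left (hnorm J) (hγ0 J)
          _ = R := by rw [← Finset.sum_mul, hγ1, one_mul]
      have hug : δ ≤ ⟪u, g⟫ := by
        rw [hg, inner_sum]
        calc δ = ∑ J, γ J * δ := by rw [← Finset.sum_mul, hγ1, one_mul]
          _ ≤ ∑ J, γ J * ⟪u, v J⟫ := by
              apply Finset.sum_le_sum
              intro J _
              exact mul_le_mul_of_nonneg_left (hmargin J) (hγ0 J)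
          _ = ∑ J, ⟪u, γ J • v J⟫ := by
              simp_rw [real_inner_smul_right]
      constructor
      · rw [heq, inner_add_right]
        push_cast
        have : δ * (s + 1) = δ * s + δ := by ring
        rw [this]
        exact add_le_add ih1 hug
      · rw [heq]
        have expand : ‖w s + g‖ ^ 2 = ‖w s‖ ^ 2 + 2 * ⟪w s, g⟫ + ‖g‖ ^ 2 :=
          norm_add_sq_real (w s) g
        have hg2 : ‖g‖ ^ 2 ≤ R ^ 2 := by
          have := pow_le_pow_left₀ (norm_nonneg g) hgnorm 2
          simpa using this
        push_cast
        calc ‖w s + g‖ ^ 2 = ‖w s‖ ^ 2 + 2 * ⟪w s, g⟫ + ‖g‖ ^ 2 := expand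
          _ ≤ (s : ℝ) * R ^ 2 + 2 * 0 + R ^ 2 := by
              linarith [ih2, hinner, hg2]
          _ = ((s : ℝ) + 1) * R ^ 2 := by ring
  obtain ⟨h1, h2⟩ := key t le_rfl
  refine ⟨?_, h2⟩
  have hcs : ⟪u, w t⟫ ≤ ‖w t‖ := by
    calc ⟪u, w t⟫ ≤ ‖u‖ * ‖w t‖ := real_inner_le_norm u (w t)
      _ = ‖w t‖ := by rw [hu, one_mul]
  have hδt : 0 ≤ δ * t := mul_nonneg hδ.le (Nat.cast_nonneg t)
  calc δ ^ 2 * (t : ℝ) ^ 2 = (δ * t) ^ 2 := by ring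
    _ ≤ ‖w t‖ ^ 2 := by
        apply pow_le_pow_left₀ hδt
        exact le_trans h1 hcs
end
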